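/- The conditional entropy functional defining quantum discord is concave on the convex set of POVMs: if E = λC + (1−λ)D is a convex combination of POVMs C and D on A (0 ≤ λ ≤ 1), then F(ρ_B, E) ≥ λF(ρ_B, C) + (1−λ)F(ρ_B, D), where F(ρ_B, E) = Σ_j p_{E_j} H(ρ_{B|E_j}). -/

import Mathlib

open Matrix Kronecker ComplexOrder

/-- Von Neumann entropy of a (Hermitian) matrix. -/
noncomputable def vnEntropy {n : Type*} [Fintype n] [DecidableEq n]
    (A : Matrix n n ℂ) : ℝ :=
  if h : A.IsHermitian then ∑ i, Real.negMulLog (h.eigenvalues i) else 0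

/-- Partial trace over the first subsystem. -/
noncomputable def ptrFst {α β : Type*} [Fintype α]
    (ρ : Matrix (α × β) (α × β) ℂ) : Matrix β β ℂ :=
  Matrix.of fun j j' => ∑ i, ρ (i, j) (i, j')

/-- Outcome probability `p_E = tr(ρ (E ⊗ I))` for a POVM element `E` on the first
subsystem. -/
noncomputable def measProb {α β : Type*} [Fintype α] [Fintype β] [DecidableEq α] [DecidableEq β]
    (ρ : Matrix (α × β) (α × β) ℂ) (E : Matrix α α ℂ) : ℝ :=
  ((ρ * (E ⊗ₖ (1 : Matrix β β ℂ))).trace).re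

/-- Post-measurement state `ρ_{B|E} = tr_A(ρ (E ⊗ I)) / p_E`. -/
noncomputable def povmPost {α β : Type*} [Fintype α] [Fintype β] [DecidableEq α] [DecidableEq β]
    (ρ : Matrix (α × β) (α × β) ℂ) (E : Matrix α α ℂ) : Matrix β β ℂ :=
  (measProb ρ E)⁻¹ • ptrFst (ρ * (E ⊗ₖ (1 : Matrix β β ℂ)))

/-- The conditional entropy functional `F(ρ_B, E) = Σ_j p_{E_j} H(ρ_{B|E_j})`. -/
noncomputable def condEntF {α β ι : Type*} [Fintype α] [Fintype β] [DecidableEq α]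
    [DecidableEq β] [Fintype ι]
    (ρ : Matrix (α × β) (α × β) ℂ) (E : ι → Matrix α α ℂ) : ℝ :=
  ∑ j, measProb ρ (E j) * vnEntropy (povmPost ρ (E j))

/-!
Each term `p_{E_j} H(ρ_{B|E_j})` equals `w(σ_j)`, where `σ_j = tr_A(ρ (E_j ⊗ I))` depends
linearly on `E_j` and `w(σ) = tr σ · H(σ / tr σ)`. So it suffices that `w` is concave on positive
semidefinite matrices, and since `w` is positively homogeneous, that it is superadditive.
For a unitary `V`, the diagonal of `V* σ V` is a doubly stochastic average of the eigenvalues of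
`σ`, so by concavity of `η(x) = -x log x` the sum `Σ_i tr σ · η(d_i / tr σ)` over that diagonal
bounds `w(σ)` from above, with equality in an eigenbasis. Taking `V` an eigenbasis of `σ + τ`,
superadditivity of `w` reduces to that of the perspective `(a, q) ↦ q η(a / q)`, which is the
two-term log-sum inequality.
-/

open Real

theorem mul_negMulLog_div_add_le {a b q r : ℝ} (ha : 0 ≤ a) (haq : a ≤ q) (hb : 0 ≤ b)
    (hbr : b ≤ r) :
    q * negMulLog (a / q) + r * negMulLog (b / r) ≤ (q + r) * negMulLog ((a + b) / (q + r)) := by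
  rcases (ha.trans haq).eq_or_lt with rfl | hq
  · simp [le_antisymm haq ha]
  rcases (hb.trans hbr).eq_or_lt with rfl | hr
  · simp [le_antisymm hbr hb]
  have hqr : 0 < q + r := by positivity
  have h := concaveOn_negMulLog.2 (Set.mem_Ici.2 (div_nonneg ha hq.le))
    (Set.mem_Ici.2 (div_nonneg hb hr.le)) (div_nonneg hq.le hqr.le) (div_nonneg hr.le hqr.le)
    (by field_simp)
  have hmix : q / (q + r) * (a / q) + r / (q + r) * (b / r) = (a + b) / (q + r) := by
    field_simp
  simp only [smul_eq_mul, hmix] at h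
  calc q * negMulLog (a / q) + r * negMulLog (b / r)
      = (q + r) * (q / (q + r) * negMulLog (a / q) + r / (q + r) * negMulLog (b / r)) := by
        field_simp
    _ ≤ (q + r) * negMulLog ((a + b) / (q + r)) := by gcongr

theorem sum_negMulLog_le_sum_negMulLog_mulVec {n : Type*} [Fintype n] [DecidableEq n]
    {w : Matrix n n ℝ} (hw : w ∈ doublyStochastic ℝ n) {x : n → ℝ} (hx : 0 ≤ x) :
    ∑ k, negMulLog (x k) ≤ ∑ i, negMulLog ((w *ᵥ x) i) := by
  calc ∑ k, negMulLog (x k) = ∑ k, (∑ i, w i k) * negMulLog (x k) := by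
        simp [sum_col_of_mem_doublyStochastic hw]
    _ = ∑ i, ∑ k, w i k • negMulLog (x k) := by
        simp only [Finset.sum_mul, smul_eq_mul]; exact Finset.sum_comm
    _ ≤ ∑ i, negMulLog (∑ k, w i k • x k) := Finset.sum_le_sum fun i _ =>
        concaveOn_negMulLog.le_map_sum (fun k _ => nonneg_of_mem_doublyStochastic hw)
          (sum_row_of_mem_doublyStochastic hw i) (fun k _ => Set.mem_Ici.2 (hx k))
    _ = ∑ i, negMulLog ((w *ᵥ x) i) := by simp [mulVec, dotProduct]

section Spectral

variable {n : Type*} [Fintype n] [DecidableEq n]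

noncomputable def unitaryDiag (V : unitaryGroup n ℂ) (A : Matrix n n ℂ) (i : n) : ℝ :=
  ((star (V : Matrix n n ℂ) * A * V) i i).re

theorem unitaryDiag_add (V : unitaryGroup n ℂ) (A B : Matrix n n ℂ) :
    unitaryDiag V (A + B) = unitaryDiag V A + unitaryDiag V B := by
  ext i
  simp [unitaryDiag, Matrix.mul_add, Matrix.add_mul]

theorem unitaryDiag_smul (V : unitaryGroup n ℂ) (c : ℝ) (A : Matrix n n ℂ) :
    unitaryDiag V (c • A) = c • unitaryDiag V A := by
  ext i
  simp [unitaryDiag, Complex.real_smul]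

theorem sum_unitaryDiag (V : unitaryGroup n ℂ) (A : Matrix n n ℂ) :
    ∑ i, unitaryDiag V A i = A.trace.re := by
  calc ∑ i, unitaryDiag V A i = (star (V : Matrix n n ℂ) * A * V).trace.re := by
        simp [unitaryDiag, Matrix.trace, Complex.re_sum]
    _ = A.trace.re := by rw [Matrix.trace_mul_cycle, mem_unitaryGroup_iff.1 V.2, Matrix.one_mul]

theorem unitaryDiag_nonneg {A : Matrix n n ℂ} (hA : A.PosSemidef) (V : unitaryGroup n ℂ)
    (i : n) : 0 ≤ unitaryDiag V A i := by
  have h := (hA.conjTranspose_mul_mul_same (V : Matrix n n ℂ)).diag_nonneg (i := i)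
  exact (Complex.nonneg_iff.1 h).1

theorem unitaryDiag_le_trace {A : Matrix n n ℂ} (hA : A.PosSemidef) (V : unitaryGroup n ℂ)
    (i : n) : unitaryDiag V A i ≤ A.trace.re :=
  sum_unitaryDiag V A ▸
    Finset.single_le_sum (fun k _ => unitaryDiag_nonneg hA V k) (Finset.mem_univ i)

theorem normSq_mem_doublyStochastic {U : Matrix n n ℂ} (hU : U ∈ unitaryGroup n ℂ) :
    (of fun i j => Complex.normSq (U i j)) ∈ doublyStochastic ℝ n := by
  refine mem_doublyStochastic_iff_sum.2 ⟨fun i j => Complex.normSq_nonneg _, fun i => ?_,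
    fun j => ?_⟩
  · have h := congr_fun (congr_fun (mem_unitaryGroup_iff.1 hU) i) i
    simp only [mul_apply, star_apply, one_apply_eq, RCLike.star_def, Complex.mul_conj] at h
    exact_mod_cast h
  · have h := congr_fun (congr_fun (mem_unitaryGroup_iff'.1 hU) j) j
    simp only [mul_apply, star_apply, one_apply_eq, RCLike.star_def, mul_comm (starRingEnd ℂ _),
      Complex.mul_conj] at h
    exact_mod_cast h

theorem mul_diagonal_mul_star_apply_self (M : Matrix n n ℂ) (d : n → ℝ) (i : n) :
    ((M * diagonal (fun k => (d k : ℂ)) * star M) i i).re =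
      ((of fun i j => Complex.normSq (M i j)) *ᵥ d) i := by
  rw [mul_apply]
  simp only [mul_diagonal, star_apply, RCLike.star_def, mulVec, dotProduct, of_apply,
    Complex.re_sum]
  refine Finset.sum_congr rfl fun k _ => ?_
  rw [mul_right_comm, Complex.mul_conj]
  simp [mul_comm]

theorem unitaryDiag_eq_mulVec_eigenvalues {A : Matrix n n ℂ} (hA : A.IsHermitian)
    (V : unitaryGroup n ℂ) :
    unitaryDiag V A =
      (of fun i j => Complex.normSq ((star (V : Matrix n n ℂ) * hA.eigenvectorUnitary) i j)) *ᵥ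
        hA.eigenvalues := by
  ext i
  have hA' := hA.spectral_theorem
  rw [Unitary.conjStarAlgAut_apply] at hA'
  rw [unitaryDiag, ← mul_diagonal_mul_star_apply_self]
  generalize hA.eigenvectorUnitary = U at hA' ⊢
  generalize hA.eigenvalues = d at hA' ⊢
  subst hA'
  simp only [star_mul, star_star, Matrix.mul_assoc]
  rfl

theorem unitaryDiag_eigenvectorUnitary {A : Matrix n n ℂ} (hA : A.IsHermitian) :
    unitaryDiag hA.eigenvectorUnitary A = hA.eigenvalues := by
  ext i
  have h := hA.conjStarAlgAut_star_eigenvectorUnitary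
  rw [Unitary.conjStarAlgAut_star_apply] at h
  simp [unitaryDiag, h]

theorem vnEntropy_le_sum_negMulLog_unitaryDiag {A : Matrix n n ℂ} (hA : A.PosSemidef)
    (V : unitaryGroup n ℂ) : vnEntropy A ≤ ∑ i, negMulLog (unitaryDiag V A i) := by
  rw [vnEntropy, dif_pos hA.1, unitaryDiag_eq_mulVec_eigenvalues hA.1]
  exact sum_negMulLog_le_sum_negMulLog_mulVec
    (normSq_mem_doublyStochastic (mul_mem (star V).2 hA.1.eigenvectorUnitary.2))
    hA.eigenvalues_nonneg

theorem vnEntropy_eq_sum_negMulLog_unitaryDiag {A : Matrix n n ℂ} (hA : A.IsHermitian) :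
    vnEntropy A = ∑ i, negMulLog (unitaryDiag hA.eigenvectorUnitary A i) := by
  rw [vnEntropy, dif_pos hA, unitaryDiag_eigenvectorUnitary]

end Spectral

section WeightedEntropy

variable {n : Type*} [Fintype n] [DecidableEq n]

noncomputable def weightedEntropy (σ : Matrix n n ℂ) : ℝ :=
  σ.trace.re * vnEntropy (σ.trace.re⁻¹ • σ)

theorem mul_sum_negMulLog_unitaryDiag_inv_smul (V : unitaryGroup n ℂ) (q : ℝ)
    (σ : Matrix n n ℂ) :
    q * ∑ i, negMulLog (unitaryDiag V (q⁻¹ • σ) i) =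
      ∑ i, q * negMulLog (unitaryDiag V σ i / q) := by
  simp [unitaryDiag_smul, Finset.mul_sum, div_eq_inv_mul]

theorem weightedEntropy_le_sum {σ : Matrix n n ℂ} (hσ : σ.PosSemidef) (V : unitaryGroup n ℂ) :
    weightedEntropy σ ≤ ∑ i, σ.trace.re * negMulLog (unitaryDiag V σ i / σ.trace.re) := by
  have hq : 0 ≤ σ.trace.re := (Complex.nonneg_iff.1 hσ.trace_nonneg).1
  rw [weightedEntropy, ← mul_sum_negMulLog_unitaryDiag_inv_smul]
  exact mul_le_mul_of_nonneg_left
    (vnEntropy_le_sum_negMulLog_unitaryDiag (hσ.smul (inv_nonneg.2 hq)) V) hq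

theorem exists_weightedEntropy_eq_sum {σ : Matrix n n ℂ} (hσ : σ.IsHermitian) :
    ∃ V : unitaryGroup n ℂ,
      weightedEntropy σ = ∑ i, σ.trace.re * negMulLog (unitaryDiag V σ i / σ.trace.re) := by
  have hσ' : (σ.trace.re⁻¹ • σ).IsHermitian := hσ.smul (IsSelfAdjoint.all _)
  exact ⟨hσ'.eigenvectorUnitary, by rw [weightedEntropy,
    vnEntropy_eq_sum_negMulLog_unitaryDiag hσ', mul_sum_negMulLog_unitaryDiag_inv_smul]⟩

theorem weightedEntropy_add_le {σ τ : Matrix n n ℂ} (hσ : σ.PosSemidef) (hτ : τ.PosSemidef) :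
    weightedEntropy σ + weightedEntropy τ ≤ weightedEntropy (σ + τ) := by
  obtain ⟨V, hV⟩ := exists_weightedEntropy_eq_sum (hσ.add hτ).1
  rw [hV, Matrix.trace_add, Complex.add_re, unitaryDiag_add]
  calc weightedEntropy σ + weightedEntropy τ
      ≤ ∑ i, σ.trace.re * negMulLog (unitaryDiag V σ i / σ.trace.re) +
          ∑ i, τ.trace.re * negMulLog (unitaryDiag V τ i / τ.trace.re) :=
        add_le_add (weightedEntropy_le_sum hσ V) (weightedEntropy_le_sum hτ V)
    _ ≤ _ := by
        rw [← Finset.sum_add_distrib]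
        exact Finset.sum_le_sum fun i _ => mul_negMulLog_div_add_le
          (unitaryDiag_nonneg hσ V i) (unitaryDiag_le_trace hσ V i)
          (unitaryDiag_nonneg hτ V i) (unitaryDiag_le_trace hτ V i)

theorem weightedEntropy_smul (σ : Matrix n n ℂ) {c : ℝ} (hc : 0 ≤ c) :
    weightedEntropy (c • σ) = c * weightedEntropy σ := by
  rcases hc.eq_or_lt with rfl | hc
  · simp [weightedEntropy]
  have htr : (c • σ).trace.re = c * σ.trace.re := by simp [Matrix.trace_smul, Complex.real_smul]
  rw [weightedEntropy, weightedEntropy, htr, smul_smul, _root_.mul_inv_rev,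
    inv_mul_cancel_right₀ hc.ne']
  ring

omit [Fintype n] [DecidableEq n] in
theorem convex_posSemidef : Convex ℝ {σ : Matrix n n ℂ | σ.PosSemidef} :=
  fun _ hσ _ hτ _ _ ha hb _ => (hσ.smul ha).add (hτ.smul hb)

theorem concaveOn_weightedEntropy :
    ConcaveOn ℝ {σ : Matrix n n ℂ | σ.PosSemidef} weightedEntropy :=
  ⟨convex_posSemidef, fun σ hσ τ hτ a b ha hb _ => by
    simpa only [smul_eq_mul, weightedEntropy_smul _ ha, weightedEntropy_smul _ hb] using
      weightedEntropy_add_le (hσ.smul ha) (hτ.smul hb)⟩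

end WeightedEntropy

section PartialTrace

variable {α β : Type*} [Fintype α]

theorem ptrFst_eq_sum_submatrix (M : Matrix (α × β) (α × β) ℂ) :
    ptrFst M = ∑ i, M.submatrix (Prod.mk i) (Prod.mk i) := by
  ext j j'
  simp [ptrFst, Matrix.sum_apply]

theorem Matrix.PosSemidef.ptrFst {M : Matrix (α × β) (α × β) ℂ} (hM : M.PosSemidef) :
    (ptrFst M).PosSemidef := by
  rw [ptrFst_eq_sum_submatrix]
  exact posSemidef_sum _ fun i _ => hM.submatrix _

variable [Fintype β]

theorem trace_ptrFst (M : Matrix (α × β) (α × β) ℂ) : (ptrFst M).trace = M.trace := by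
  simp only [ptrFst, Matrix.trace, Matrix.diag, Fintype.sum_prod_type, Matrix.of_apply]
  exact Finset.sum_comm

variable [DecidableEq β]

theorem ptrFst_mul_kronecker_one_comm (M : Matrix (α × β) (α × β) ℂ) (A : Matrix α α ℂ) :
    ptrFst (M * (A ⊗ₖ (1 : Matrix β β ℂ))) = ptrFst ((A ⊗ₖ (1 : Matrix β β ℂ)) * M) := by
  ext j j'
  simp only [ptrFst, Matrix.of_apply, Matrix.mul_apply, kroneckerMap_apply, Matrix.one_apply,
    Fintype.sum_prod_type, mul_ite, mul_zero, mul_one, ite_mul, zero_mul,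
    Finset.sum_ite_eq', Finset.sum_ite_eq, Finset.mem_univ, if_true]
  rw [Finset.sum_comm]
  exact Finset.sum_congr rfl fun i _ => Finset.sum_congr rfl fun i' _ => mul_comm _ _

open scoped MatrixOrder in
/-- Writing `E = a* a`, cyclicity of the partial trace in the first factor turns
`tr_A(ρ (E ⊗ I))` into `tr_A((a ⊗ I) ρ (a ⊗ I)*)`. -/
theorem posSemidef_ptrFst_mul_kronecker_one [DecidableEq α] {ρ : Matrix (α × β) (α × β) ℂ}
    (hρ : ρ.PosSemidef) {E : Matrix α α ℂ} (hE : E.PosSemidef) :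
    (ptrFst (ρ * (E ⊗ₖ (1 : Matrix β β ℂ)))).PosSemidef := by
  obtain ⟨a, rfl⟩ := CStarAlgebra.nonneg_iff_eq_star_mul_self.mp hE.nonneg
  have hfac : star a ⊗ₖ (1 : Matrix β β ℂ) = (a ⊗ₖ (1 : Matrix β β ℂ))ᴴ := by
    rw [conjTranspose_kronecker, conjTranspose_one, star_eq_conjTranspose]
  rw [← mul_one (1 : Matrix β β ℂ), mul_kronecker_mul, ← Matrix.mul_assoc,
    ptrFst_mul_kronecker_one_comm, hfac, ← Matrix.mul_assoc]
  exact (hρ.mul_mul_conjTranspose_same _).ptrFst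

end PartialTrace

section Measurement

variable {α β : Type*} [Fintype α] [Fintype β] [DecidableEq α] [DecidableEq β]

noncomputable def unnormalizedPost (ρ : Matrix (α × β) (α × β) ℂ) :
    Matrix α α ℂ →ₗ[ℝ] Matrix β β ℂ where
  toFun E := ptrFst (ρ * (E ⊗ₖ (1 : Matrix β β ℂ)))
  map_add' E F := by
    ext j j'
    simp [ptrFst, add_kronecker, Matrix.mul_add, Finset.sum_add_distrib]
  map_smul' c E := by
    ext j j'
    simp [ptrFst, smul_kronecker, Finset.smul_sum]

theorem measProb_mul_vnEntropy_povmPost (ρ : Matrix (α × β) (α × β) ℂ) (E : Matrix α α ℂ) :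
    measProb ρ E * vnEntropy (povmPost ρ E) = weightedEntropy (unnormalizedPost ρ E) := by
  simp only [weightedEntropy, unnormalizedPost, LinearMap.coe_mk, AddHom.coe_mk, povmPost,
    measProb, trace_ptrFst]

theorem concaveOn_measProb_mul_vnEntropy_povmPost {ρ : Matrix (α × β) (α × β) ℂ}
    (hρ : ρ.PosSemidef) :
    ConcaveOn ℝ {E : Matrix α α ℂ | E.PosSemidef}
      (fun E => measProb ρ E * vnEntropy (povmPost ρ E)) := by
  simp only [measProb_mul_vnEntropy_povmPost]
  exact (concaveOn_weightedEntropy.comp_linearMap (unnormalizedPost ρ)).subset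
    (fun E hE => posSemidef_ptrFst_mul_kronecker_one hρ hE) convex_posSemidef

end Measurement

theorem stmt_7_general {α β ι : Type*} [Fintype α] [Fintype β] [DecidableEq α] [DecidableEq β]
    [Fintype ι]
    (ρ : Matrix (α × β) (α × β) ℂ) (hρ : ρ.PosSemidef)
    (C D : ι → Matrix α α ℂ)
    (hC : ∀ j, (C j).PosSemidef)
    (hD : ∀ j, (D j).PosSemidef)
    (t : ℝ) (ht0 : 0 ≤ t) (ht1 : t ≤ 1) :
    t * condEntF ρ C + (1 - t) * condEntF ρ D ≤
      condEntF ρ (fun j => t • C j + (1 - t) • D j) := by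
  rw [condEntF, condEntF, condEntF, Finset.mul_sum, Finset.mul_sum, ← Finset.sum_add_distrib]
  exact Finset.sum_le_sum fun j _ => (concaveOn_measProb_mul_vnEntropy_povmPost hρ).2
    (hC j) (hD j) ht0 (sub_nonneg.2 ht1) (add_sub_cancel t 1)

/-- The conditional entropy functional defining quantum discord is concave on the convex
set of POVMs: `F(ρ_B, λC + (1−λ)D) ≥ λ F(ρ_B, C) + (1−λ) F(ρ_B, D)`. -/
theorem stmt_7 {α β ι : Type*} [Fintype α] [Fintype β] [DecidableEq α] [DecidableEq β]
    [Fintype ι]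
    (ρ : Matrix (α × β) (α × β) ℂ) (hρ : ρ.PosSemidef) (htr : ρ.trace = 1)
    (C D : ι → Matrix α α ℂ)
    (hC : ∀ j, (C j).PosSemidef) (hCsum : ∑ j, C j = 1)
    (hD : ∀ j, (D j).PosSemidef) (hDsum : ∑ j, D j = 1)
    (t : ℝ) (ht0 : 0 ≤ t) (ht1 : t ≤ 1) :
    t * condEntF ρ C + (1 - t) * condEntF ρ D ≤
      condEntF ρ (fun j => t • C j + (1 - t) • D j) :=
  stmt_7_general ρ hρ C D hC hD t ht0 ht1
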